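/- Let (G,[·,...,·]) be a higher-order Lie algebra of even order n with G = V_0 ⊕ V_1 as vector spaces. If [V_1, V_0, ..., V_0] ⊆ V_1 (one argument from V_1 and n−1 from V_0), then the composition π_0 ∘ [·,...,·] restricted to V_0 (where π_0 : G → V_0 is the projection along V_1) defines an alternating n-bracket on V_0 satisfying the generalized Jacobi identity; i.e., V_0 with the projected bracket is a higher-order Lie algebra (the reduced multialgebra). -/

import Mathlib

/-- Generalized Jacobi identity for an alternating (m+1)-bracket. -/
def GJI {K G : Type*} [CommRing K] [AddCommGroup G] [Module K G] {m : ℕ}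
    (B : AlternatingMap K G G (Fin (m + 1))) : Prop :=
  ∀ x : Fin (2 * m + 1) → G,
    ∑ σ : Equiv.Perm (Fin (2 * m + 1)), (Equiv.Perm.sign σ : ℤ) •
      B (Fin.cons (B fun j => x (σ (Fin.castLE (by omega) j)))
        (fun j : Fin m => x (σ ⟨m + 1 + j.1, by have := j.isLt; omega⟩))) = 0

/-! Modulo `V₁`, the inner bracket of a nested bracket may be replaced by its `V₀`-component:
the difference has one argument in `V₁` and the others in `V₀`, so its outer bracket lies in `V₁`
and is killed by `π₀`. Hence the Jacobi sum of the reduced bracket is `π₀` of the Jacobi sum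
of `B`, which vanishes. -/

namespace AlternatingMap

variable {K G : Type*} [CommRing K] [AddCommGroup G] [Module K G] {m : ℕ}

noncomputable def reduce (B : AlternatingMap K G G (Fin (m + 1))) {V0 V1 : Submodule K G}
    (hcompl : IsCompl V0 V1) : AlternatingMap K V0 V0 (Fin (m + 1)) :=
  (V0.projectionOnto V1 hcompl).compAlternatingMap (B.compLinearMap V0.subtype)

variable {B : AlternatingMap K G G (Fin (m + 1))} {V0 V1 : Submodule K G}
  (hcompl : IsCompl V0 V1)
  (hred : ∀ x : Fin (m + 1) → G, x 0 ∈ V1 → (∀ k, k ≠ 0 → x k ∈ V0) → B x ∈ V1)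
include hred

theorem projectionOnto_apply_cons_projection (a : G) (y : Fin m → V0) :
    V0.projectionOnto V1 hcompl (B (Fin.cons (V0.projection V1 hcompl a) (V0.subtype ∘ y))) =
      V0.projectionOnto V1 hcompl (B (Fin.cons a (V0.subtype ∘ y))) := by
  have hV1 : B (Fin.cons (a - V0.projection V1 hcompl a) (V0.subtype ∘ y)) ∈ V1 :=
    hred _ (V0.sub_projection_mem hcompl a) fun k hk => by
      obtain ⟨j, rfl⟩ := Fin.exists_succ_eq.2 hk
      exact (y j).2
  have hsplit := B.toMultilinearMap.cons_add (V0.subtype ∘ y) (V0.projection V1 hcompl a)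
    (a - V0.projection V1 hcompl a)
  simp only [coe_multilinearMap, add_sub_cancel] at hsplit
  rw [hsplit, map_add, Submodule.projectionOnto_apply_of_mem_right hcompl hV1, add_zero]

theorem reduce_apply_cons_reduce (x : Fin (m + 1) → V0) (y : Fin m → V0) :
    B.reduce hcompl (Fin.cons (B.reduce hcompl x) y) =
      V0.projectionOnto V1 hcompl (B (Fin.cons (B (V0.subtype ∘ x)) (V0.subtype ∘ y))) := by
  change V0.projectionOnto V1 hcompl (B (V0.subtype ∘ Fin.cons _ y)) = _
  rw [Fin.comp_cons]
  exact projectionOnto_apply_cons_projection hcompl hred _ y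

end AlternatingMap

theorem GJI.reduce {K G : Type*} [CommRing K] [AddCommGroup G] [Module K G] {m : ℕ}
    {B : AlternatingMap K G G (Fin (m + 1))} (hB : GJI B) {V0 V1 : Submodule K G}
    (hcompl : IsCompl V0 V1)
    (hred : ∀ x : Fin (m + 1) → G, x 0 ∈ V1 → (∀ k, k ≠ 0 → x k ∈ V0) → B x ∈ V1) :
    GJI (B.reduce hcompl) := fun x => by
  have hπ := congrArg (V0.projectionOnto V1 hcompl) (hB (V0.subtype ∘ x))
  rw [map_sum, map_zero] at hπ
  simp only [AlternatingMap.reduce_apply_cons_reduce hcompl hred, ← map_zsmul]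
  exact hπ

theorem reduced_multialgebra_general {K G : Type*} [Field K] [AddCommGroup G] [Module K G]
    (m : ℕ)
    (B : AlternatingMap K G G (Fin (m + 1))) (hB : GJI B)
    (V0 V1 : Submodule K G) (hcompl : IsCompl V0 V1)
    (hred : ∀ x : Fin (m + 1) → G, x 0 ∈ V1 → (∀ k, k ≠ 0 → x k ∈ V0) → B x ∈ V1) :
    GJI (K := K) (G := V0)
      ((V0.linearProjOfIsCompl V1 hcompl).compAlternatingMap
        (B.compLinearMap V0.subtype)) :=
  hB.reduce hcompl hred

/-- if G = V₀ ⊕ V₁ and `[V₁, V₀, ..., V₀] ⊆ V₁`, then the projected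
bracket `π₀ ∘ [·,...,·]` on V₀ is an alternating (m+1)-bracket satisfying the
generalized Jacobi identity (the reduced multialgebra). -/
theorem reduced_multialgebra {K G : Type*} [Field K] [AddCommGroup G] [Module K G]
    (m : ℕ) (hn : Even (m + 1))
    (B : AlternatingMap K G G (Fin (m + 1))) (hB : GJI B)
    (V0 V1 : Submodule K G) (hcompl : IsCompl V0 V1)
    (hred : ∀ x : Fin (m + 1) → G, x 0 ∈ V1 → (∀ k, k ≠ 0 → x k ∈ V0) → B x ∈ V1) :
    GJI (K := K) (G := V0)
      ((V0.linearProjOfIsCompl V1 hcompl).compAlternatingMap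
        (B.compLinearMap V0.subtype)) :=
  reduced_multialgebra_general m B hB V0 V1 hcompl hred
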